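/- Let n, r be integers with 1 ≤ r ≤ n−2 and let f : [0,1] → ℝ be (r+2) times continuously differentiable. Then ‖ ((n+r−1)!(n−r)!/((n−1)! n!)) · (U_n f)^{(r)} − U_{n−r}(f^{(r)}) ‖ ≤ (1/4)·((n+1)/((n+1)² − r²))·‖f^{(r+2)}‖ + (r/(n+r))·‖f^{(r+1)}‖ + ω(f^{(r)}, r(n−2−r)/(n² − r²)). -/

import Mathlib

/-- Bernstein basis polynomial `p_{n,k}(x) = C(n,k) x^k (1-x)^{n-k}`. -/
noncomputable def bern (n k : ℕ) (x : ℝ) : ℝ :=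
  (n.choose k : ℝ) * x ^ k * (1 - x) ^ (n - k)

/-- Genuine Bernstein–Durrmeyer operator
`U_n(f;x) = (1-x)^n f(0) + x^n f(1) + (n-1) Σ_{k=1}^{n-1} p_{n,k}(x) ∫₀¹ f(t) p_{n-2,k-1}(t) dt`. -/
noncomputable def genuineBD (n : ℕ) (f : ℝ → ℝ) (x : ℝ) : ℝ :=
  (1 - x) ^ n * f 0 + x ^ n * f 1 +
    ((n : ℝ) - 1) * ∑ k ∈ Finset.Icc 1 (n - 1),
      bern n k x * ∫ t in (0:ℝ)..1, f t * bern (n - 2) (k - 1) t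

/-- Supremum norm on `[0,1]`. -/
noncomputable def supNorm (g : ℝ → ℝ) : ℝ :=
  ⨆ x : Set.Icc (0:ℝ) 1, |g x|

/-- First modulus of continuity on `[0,1]`. -/
noncomputable def modCont (g : ℝ → ℝ) (δ : ℝ) : ℝ :=
  sSup {d : ℝ | ∃ x ∈ Set.Icc (0:ℝ) 1, ∃ y ∈ Set.Icc (0:ℝ) 1, |x - y| ≤ δ ∧ d = |g x - g y|}

/-!
Write `U_N g = ∑ₖ p_{N,k} F_{N,k}(g)`, where `F_{N,0}(g) = g 0`, `F_{N,N}(g) = g 1` and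
`F_{N,k}(g) = (N-1) ∫ g p_{N-2,k-1}` otherwise (`bdCoeff N g k`). Integration by parts gives
`F_{N,k+1}(g) - F_{N,k}(g) = ∫ g' p_{N-1,k}`, and `∫ p_{N-1,k} = 1/N` because `U_N` reproduces
constants. So this difference is `F_{N+1,k+1}(g')/N` and has absolute value at most `‖g'‖/N`.

By the first fact and the derivative of a Bernstein sum, `(U_n f)^{(r)}` equals
`n!(n-1)!/((n-r)!(n+r-1)!) ∑ₖ p_{n-r,k} F_{n+r,r+k}(f^{(r)})` (`shiftedBD`). By the second,
together with the observation that for `0 < k < m` the functional `F_{m,k}` is a convex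
combination of `F_{m+2r,k}, …, F_{m+2r,k+2r}` (multiply its weight by `(t + (1-t))^{2r}`), we get
`|F_{m+2r,r+k}(g) - F_{m,k}(g)| ≤ r‖g'‖/(m+2r)`. For `m = n - r` the difference in the theorem is
thus at most `r/(n+r) ‖f^{(r+1)}‖`, and the remaining terms of the bound are nonnegative.
-/

open Finset MeasureTheory

lemma bern_eq_eval (n k : ℕ) (x : ℝ) : bern n k x = (bernsteinPolynomial ℝ n k).eval x := by
  simp [bern, bernsteinPolynomial]

lemma continuous_bern (n k : ℕ) : Continuous (bern n k) := by
  unfold bern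
  fun_prop

lemma bern_nonneg {x : ℝ} (hx : x ∈ Set.Icc (0:ℝ) 1) (n k : ℕ) : 0 ≤ bern n k x := by
  obtain ⟨hx0, hx1⟩ := hx
  have : 0 ≤ 1 - x := sub_nonneg.2 hx1
  unfold bern
  positivity

lemma sum_bern (n : ℕ) (x : ℝ) : ∑ k ∈ range (n + 1), bern n k x = 1 := by
  simp_rw [bern_eq_eval, ← Polynomial.eval_finsetSum, bernsteinPolynomial.sum, Polynomial.eval_one]

lemma bern_of_lt {n k : ℕ} (h : n < k) (x : ℝ) : bern n k x = 0 := by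
  simp [bern_eq_eval, bernsteinPolynomial.eq_zero_of_lt ℝ h]

lemma bern_zero_right (n k : ℕ) : bern n k 0 = if k = 0 then 1 else 0 := by
  rw [bern_eq_eval, bernsteinPolynomial.eval_at_0]

lemma bern_one_right (n k : ℕ) : bern n k 1 = if k = n then 1 else 0 := by
  rw [bern_eq_eval, bernsteinPolynomial.eval_at_1]

lemma hasDerivAt_bern_succ (n k : ℕ) (x : ℝ) :
    HasDerivAt (bern (n + 1) (k + 1)) (((n : ℝ) + 1) * (bern n k x - bern n (k + 1) x)) x := by
  have h := (bernsteinPolynomial ℝ (n + 1) (k + 1)).hasDerivAt x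
  rw [bernsteinPolynomial.derivative_succ] at h
  simpa [funext (bern_eq_eval _ _), bern_eq_eval] using h

lemma hasDerivAt_bern_zero (n : ℕ) (x : ℝ) :
    HasDerivAt (bern (n + 1) 0) (-((n : ℝ) + 1) * bern n 0 x) x := by
  have h := (bernsteinPolynomial ℝ (n + 1) 0).hasDerivAt x
  rw [bernsteinPolynomial.derivative_zero] at h
  simpa [funext (bern_eq_eval _ _), bern_eq_eval] using h

lemma hasDerivAt_sum_bern_mul (n : ℕ) (a : ℕ → ℝ) (x : ℝ) :
    HasDerivAt (fun y => ∑ k ∈ range (n + 2), bern (n + 1) k y * a k)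
      (((n : ℝ) + 1) * ∑ k ∈ range (n + 1), bern n k x * (a (k + 1) - a k)) x := by
  simp_rw [sum_range_succ' _ (n + 1)]
  refine ((HasDerivAt.fun_sum (u := range (n + 1))
    fun k _ => (hasDerivAt_bern_succ n k x).mul_const (a (k + 1))).fun_add
    ((hasDerivAt_bern_zero n x).mul_const (a 0))).congr_deriv ?_
  have hshift := sum_range_succ' (fun k => bern n k x * a k) (n + 1)
  rw [sum_range_succ, bern_of_lt (Nat.lt_succ_self n)] at hshift
  simp only [mul_assoc, ← mul_sum, mul_sub, sub_mul, sum_sub_distrib]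
  linear_combination ((n : ℝ) + 1) * hshift

lemma bern_mul_bern {a b i j : ℕ} (hi : i ≤ a) (hj : j ≤ b) (t : ℝ) :
    bern a i t * bern b j t
      = (a.choose i * b.choose j / (a + b).choose (i + j) : ℝ) * bern (a + b) (i + j) t := by
  have hc : ((a + b).choose (i + j) : ℝ) ≠ 0 := by
    exact_mod_cast (Nat.choose_pos (by omega)).ne'
  unfold bern
  rw [show a + b - (i + j) = (a - i) + (b - j) by omega, pow_add, pow_add]
  field_simp

lemma abs_sum_mul_le_of_sum_eq_one {ι : Type*} {s : Finset ι} {w a : ι → ℝ} {C : ℝ}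
    (hw : ∀ i ∈ s, 0 ≤ w i) (hsum : ∑ i ∈ s, w i = 1) (ha : ∀ i ∈ s, |a i| ≤ C) :
    |∑ i ∈ s, w i * a i| ≤ C :=
  calc |∑ i ∈ s, w i * a i| ≤ ∑ i ∈ s, w i * |a i| := by
        refine (abs_sum_le_sum_abs _ _).trans_eq (sum_congr rfl fun i hi => ?_)
        rw [abs_mul, abs_of_nonneg (hw i hi)]
    _ ≤ ∑ i ∈ s, w i * C := sum_le_sum fun i hi => mul_le_mul_of_nonneg_left (ha i hi) (hw i hi)
    _ = C := by rw [← sum_mul, hsum, one_mul]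

noncomputable def bdCoeff (N : ℕ) (g : ℝ → ℝ) (i : ℕ) : ℝ :=
  if i = 0 then g 0 else if i = N then g 1
  else ((N : ℝ) - 1) * ∫ t in (0:ℝ)..1, g t * bern (N - 2) (i - 1) t

lemma intervalIntegrable_mul_bern {g : ℝ → ℝ} (hg : Continuous g) (n k : ℕ) :
    IntervalIntegrable (fun t => g t * bern n k t) volume 0 1 :=
  (hg.mul (continuous_bern n k)).intervalIntegrable 0 1

lemma genuineBD_eq_sum_bern_mul_bdCoeff {N : ℕ} (hN : 1 ≤ N) (g : ℝ → ℝ) (x : ℝ) :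
    genuineBD N g x = ∑ k ∈ range (N + 1), bern N k x * bdCoeff N g k := by
  obtain ⟨M, rfl⟩ : ∃ M, N = M + 1 := ⟨N - 1, by omega⟩
  rw [sum_range_succ, sum_range_succ', genuineBD, Nat.add_sub_cancel, ← Ico_add_one_right_eq_Icc,
    sum_Ico_eq_sum_range, Nat.add_sub_cancel, mul_sum]
  have hmid : ∀ k ∈ range M, ((M + 1 : ℕ) - 1 : ℝ) * (bern (M + 1) (1 + k) x
      * ∫ t in (0:ℝ)..1, g t * bern (M + 1 - 2) (1 + k - 1) t)
      = bern (M + 1) (k + 1) x * bdCoeff (M + 1) g (k + 1) := by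
    intro k hk
    rw [bdCoeff, if_neg k.succ_ne_zero, if_neg (by simp at hk; omega), add_comm 1 k]
    ring
  rw [sum_congr rfl hmid]
  simp [bdCoeff, bern]
  ring

lemma bdCoeff_succ_sub {M i : ℕ} (hi : i ≤ M + 1) {g : ℝ → ℝ} (hg : Differentiable ℝ g)
    (hg' : Continuous (deriv g)) :
    bdCoeff (M + 2) g (i + 1) - bdCoeff (M + 2) g i
      = ∫ t in (0:ℝ)..1, deriv g t * bern (M + 1) i t := by
  have ibp : ∀ {v v' : ℝ → ℝ}, (∀ t, HasDerivAt v (v' t) t) → Continuous v' →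
      ∫ t in (0:ℝ)..1, deriv g t * v t = g 1 * v 1 - g 0 * v 0 - ∫ t in (0:ℝ)..1, g t * v' t := by
    intro v v' hv hv'
    have := intervalIntegral.integral_mul_deriv_eq_deriv_mul (fun t _ => hv t)
      (fun t _ => (hg t).hasDerivAt) (hv'.intervalIntegrable 0 1) (hg'.intervalIntegrable 0 1)
    simp only [mul_comm (v _), mul_comm (v' _)] at this
    linarith
  have hgc := hg.continuous
  rcases i with _ | j
  · rw [ibp (hasDerivAt_bern_zero M) (continuous_const.mul (continuous_bern M 0))]
    simp_rw [mul_left_comm (g _), intervalIntegral.integral_const_mul]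
    simp [bdCoeff, bern_zero_right, bern_one_right]
    ring
  · rw [ibp (hasDerivAt_bern_succ M j)
      (continuous_const.mul ((continuous_bern M j).sub (continuous_bern M (j + 1))))]
    simp_rw [mul_left_comm (g _), intervalIntegral.integral_const_mul, mul_sub,
      intervalIntegral.integral_sub (intervalIntegrable_mul_bern hgc _ _)
        (intervalIntegrable_mul_bern hgc _ _)]
    rcases (Nat.le_of_succ_le_succ hi).lt_or_eq with hj | rfl
    · rw [bdCoeff, bdCoeff, if_neg (by omega), if_neg (by omega), if_neg (by omega),
        if_neg (by omega)]
      simp [bern_zero_right, bern_one_right, hj.ne]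
      ring
    · simp [bdCoeff, bern_zero_right, bern_one_right, bern_of_lt (Nat.lt_succ_self j)]
      left
      ring

lemma bdCoeff_const (M : ℕ) (c : ℝ) {i : ℕ} (hi : i ≤ M + 2) :
    bdCoeff (M + 2) (fun _ => c) i = c := by
  induction i with
  | zero => simp [bdCoeff]
  | succ i ih =>
    have h := bdCoeff_succ_sub (M := M) (by omega : i ≤ M + 1) (differentiable_const c)
      (by simpa using continuous_const)
    simp only [deriv_const', zero_mul, intervalIntegral.integral_zero] at h
    linarith [ih (by omega)]

lemma integral_bern {M i : ℕ} (hi : i ≤ M) : ∫ t in (0:ℝ)..1, bern M i t = 1 / ((M : ℝ) + 1) := by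
  have h := bdCoeff_const M 1 (by omega : i + 1 ≤ M + 2)
  rw [bdCoeff, if_neg i.succ_ne_zero, if_neg (by omega), Nat.add_sub_cancel, Nat.add_sub_cancel]
    at h
  simp only [one_mul, Nat.cast_add, Nat.cast_ofNat] at h
  rw [eq_div_iff (by positivity)]
  linarith

lemma abs_bdCoeff_succ_sub_le {M i : ℕ} (hi : i ≤ M + 1) {g : ℝ → ℝ} (hg : Differentiable ℝ g)
    (hg' : Continuous (deriv g)) {G : ℝ} (hG : ∀ t ∈ Set.Icc (0:ℝ) 1, |deriv g t| ≤ G) :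
    |bdCoeff (M + 2) g (i + 1) - bdCoeff (M + 2) g i| ≤ G / ((M : ℝ) + 2) := by
  rw [bdCoeff_succ_sub hi hg hg', ← Real.norm_eq_abs]
  calc ‖∫ t in (0:ℝ)..1, deriv g t * bern (M + 1) i t‖
      ≤ ∫ t in (0:ℝ)..1, G * bern (M + 1) i t := by
        refine intervalIntegral.norm_integral_le_of_norm_le zero_le_one
          (Filter.Eventually.of_forall fun t ht => ?_)
          ((continuous_const.mul (continuous_bern _ _)).intervalIntegrable (μ := volume) 0 1)
        have ht' : t ∈ Set.Icc (0:ℝ) 1 := Set.Ioc_subset_Icc_self ht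
        rw [Real.norm_eq_abs, abs_mul, abs_of_nonneg (bern_nonneg ht' _ _)]
        exact mul_le_mul_of_nonneg_right (hG t ht') (bern_nonneg ht' _ _)
    _ = G / ((M : ℝ) + 2) := by
        rw [intervalIntegral.integral_const_mul, integral_bern hi]
        push_cast
        ring

lemma abs_bdCoeff_sub_le {M a b d : ℕ} (hab : a ≤ b) (hbd : b ≤ a + d) (hb : b ≤ M + 2)
    {g : ℝ → ℝ} (hg : Differentiable ℝ g) (hg' : Continuous (deriv g)) {G : ℝ}
    (hG : ∀ t ∈ Set.Icc (0:ℝ) 1, |deriv g t| ≤ G) :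
    |bdCoeff (M + 2) g b - bdCoeff (M + 2) g a| ≤ d * G / ((M : ℝ) + 2) := by
  have hG0 : 0 ≤ G := (abs_nonneg _).trans (hG 0 (by simp))
  rw [abs_sub_comm, ← Real.dist_eq]
  calc dist (bdCoeff (M + 2) g a) (bdCoeff (M + 2) g b)
      ≤ ∑ _i ∈ Ico a b, G / ((M : ℝ) + 2) :=
        dist_le_Ico_sum_of_dist_le hab fun _ hk => (Real.dist_eq _ _).trans_le <| by
          rw [abs_sub_comm]
          exact abs_bdCoeff_succ_sub_le (by omega) hg hg' hG
    _ ≤ d * G / ((M : ℝ) + 2) := by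
        rw [sum_const, Nat.card_Ico, nsmul_eq_mul, mul_div_assoc]
        gcongr
        exact_mod_cast (by omega : b - a ≤ d)

lemma integral_mul_bern_eq_sum {M i : ℕ} (hi : i ≤ M) (R : ℕ) {g : ℝ → ℝ} (hg : Continuous g) :
    ∫ t in (0:ℝ)..1, g t * bern M i t
      = ∑ j ∈ range (R + 1), (M.choose i * R.choose j / (M + R).choose (i + j) : ℝ)
          * ∫ t in (0:ℝ)..1, g t * bern (M + R) (i + j) t := by
  have hsplit : ∀ t, g t * bern M i t = ∑ j ∈ range (R + 1),
      (M.choose i * R.choose j / (M + R).choose (i + j) : ℝ) * (g t * bern (M + R) (i + j) t) := by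
    intro t
    rw [← mul_one (bern M i t), ← sum_bern R t, mul_sum, mul_sum]
    refine sum_congr rfl fun j hj => ?_
    rw [bern_mul_bern hi (by simpa [Nat.lt_succ_iff] using hj)]
    ring
  simp_rw [hsplit]
  rw [intervalIntegral.integral_finsetSum fun j _ =>
    (intervalIntegrable_mul_bern hg _ _).const_mul _]
  simp_rw [intervalIntegral.integral_const_mul]

lemma exists_bdCoeff_eq_sum_mul {m k : ℕ} (hk : 1 ≤ k) (hkm : k < m) (R : ℕ) :
    ∃ w : ℕ → ℝ, (∀ j, 0 ≤ w j) ∧ ∑ j ∈ range (R + 1), w j = 1 ∧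
      ∀ g : ℝ → ℝ, Continuous g →
        bdCoeff m g k = ∑ j ∈ range (R + 1), w j * bdCoeff (m + R) g (k + j) := by
  obtain ⟨M, rfl⟩ : ∃ M, m = M + 2 := ⟨m - 2, by omega⟩
  obtain ⟨i, rfl⟩ : ∃ i, k = i + 1 := ⟨k - 1, by omega⟩
  rw [show M + 2 + R = M + R + 2 by ring]
  set w : ℕ → ℝ := fun j => ((M : ℝ) + 1) / ((M : ℝ) + R + 1)
    * (M.choose i * R.choose j / (M + R).choose (i + j) : ℝ)
  have hmix : ∀ g : ℝ → ℝ, Continuous g →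
      bdCoeff (M + 2) g (i + 1)
        = ∑ j ∈ range (R + 1), w j * bdCoeff (M + R + 2) g (i + 1 + j) := by
    intro g hg
    have hinner : ∀ j ∈ range (R + 1), bdCoeff (M + R + 2) g (i + 1 + j)
        = ((M : ℝ) + R + 1) * ∫ t in (0:ℝ)..1, g t * bern (M + R) (i + j) t := by
      intro j hj
      have := mem_range.1 hj
      rw [bdCoeff, if_neg (by omega), if_neg (by omega), show i + 1 + j - 1 = i + j by omega,
        Nat.add_sub_cancel]
      push_cast
      ring
    rw [sum_congr rfl fun j hj => by rw [hinner j hj], bdCoeff, if_neg (by omega),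
      if_neg (by omega), Nat.add_sub_cancel, Nat.add_sub_cancel,
      integral_mul_bern_eq_sum (by omega) R hg, mul_sum]
    refine sum_congr rfl fun j _ => ?_
    simp only [w]
    field_simp
    push_cast
    ring
  refine ⟨w, fun j => by positivity, ?_, hmix⟩
  have h1 := hmix (fun _ => 1) continuous_const
  rw [bdCoeff_const M 1 (by omega)] at h1
  rw [sum_congr rfl fun j hj => by
    rw [bdCoeff_const (M + R) 1 (by have := mem_range.1 hj; omega), mul_one]] at h1
  exact h1.symm

lemma abs_bdCoeff_add_sub_bdCoeff_le {m r k : ℕ} (hm : 2 ≤ m) (hk : k ≤ m) {g : ℝ → ℝ}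
    (hg : Differentiable ℝ g) (hg' : Continuous (deriv g)) {G : ℝ}
    (hG : ∀ t ∈ Set.Icc (0:ℝ) 1, |deriv g t| ≤ G) :
    |bdCoeff (m + 2 * r) g (r + k) - bdCoeff m g k| ≤ r * G / ((m : ℝ) + 2 * r) := by
  obtain ⟨M, hM⟩ : ∃ M, m + 2 * r = M + 2 := ⟨m + 2 * r - 2, by omega⟩
  have hMcast : (m : ℝ) + 2 * r = (M : ℝ) + 2 := by exact_mod_cast hM
  have lip : ∀ {a b : ℕ}, a ≤ b → b ≤ a + r → b ≤ M + 2 →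
      |bdCoeff (M + 2) g b - bdCoeff (M + 2) g a| ≤ r * G / ((M : ℝ) + 2) :=
    fun hab hbr hb => abs_bdCoeff_sub_le hab hbr hb hg hg' hG
  rcases Nat.eq_zero_or_pos k with rfl | hk0
  · rw [hM, hMcast, show bdCoeff m g 0 = bdCoeff (M + 2) g 0 by simp [bdCoeff]]
    exact lip (by omega) (by omega) (by omega)
  rcases hk.lt_or_eq with hkm | rfl
  · obtain ⟨w, hw0, hw1, hmix⟩ := exists_bdCoeff_eq_sum_mul hk0 hkm (2 * r)
    rw [hmix g hg.continuous, hM, hMcast]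
    have hcomb :
        bdCoeff (M + 2) g (r + k) - ∑ j ∈ range (2 * r + 1), w j * bdCoeff (M + 2) g (k + j)
          = ∑ j ∈ range (2 * r + 1),
              w j * (bdCoeff (M + 2) g (r + k) - bdCoeff (M + 2) g (k + j)) := by
      simp only [mul_sub, sum_sub_distrib, ← sum_mul, hw1, one_mul]
    rw [hcomb]
    refine abs_sum_mul_le_of_sum_eq_one (fun j _ => hw0 j) hw1 fun j hj => ?_
    have := mem_range.1 hj
    rcases le_total j r with hjr | hrj
    · exact lip (by omega) (by omega) (by omega)
    · rw [abs_sub_comm]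
      exact lip (by omega) (by omega) (by omega)
  · rw [abs_sub_comm, hM, hMcast, show bdCoeff k g k = bdCoeff (M + 2) g (M + 2) by
      simp [bdCoeff, hk0.ne']]
    exact lip (by omega) (by omega) le_rfl

noncomputable def shiftedBD (M N s : ℕ) (g : ℝ → ℝ) (x : ℝ) : ℝ :=
  ∑ k ∈ range (M + 1), bern M k x * bdCoeff N g (s + k)

lemma genuineBD_eq_shiftedBD {N : ℕ} (hN : 1 ≤ N) (g : ℝ → ℝ) :
    genuineBD N g = shiftedBD N N 0 g := by
  ext x
  simp [shiftedBD, genuineBD_eq_sum_bern_mul_bdCoeff hN]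

lemma hasDerivAt_shiftedBD {M N s : ℕ} (hN : 2 ≤ N) (hs : s + M + 1 ≤ N) {g : ℝ → ℝ}
    (hg : Differentiable ℝ g) (hg' : Continuous (deriv g)) (x : ℝ) :
    HasDerivAt (shiftedBD (M + 1) N s g)
      (((M : ℝ) + 1) / N * shiftedBD M (N + 1) (s + 1) (deriv g) x) x := by
  obtain ⟨L, rfl⟩ : ∃ L, N = L + 2 := ⟨N - 2, by omega⟩
  refine (hasDerivAt_sum_bern_mul M (fun k => bdCoeff (L + 2) g (s + k)) x).congr_deriv ?_
  rw [shiftedBD, mul_sum, mul_sum]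
  refine sum_congr rfl fun k hk => ?_
  have := mem_range.1 hk
  rw [← add_assoc, bdCoeff_succ_sub (by omega) hg hg', bdCoeff, if_neg (by omega),
    if_neg (by omega), show L + 2 + 1 - 2 = L + 1 by omega, show s + 1 + k - 1 = s + k by omega]
  push_cast
  field_simp
  ring

lemma iteratedDeriv_genuineBD {n s : ℕ} (hn : 2 ≤ n) (hs : s ≤ n) {f : ℝ → ℝ}
    (hf : ContDiff ℝ s f) :
    iteratedDeriv s (genuineBD n f) = fun x => (n.descFactorial s / n.ascFactorial s : ℝ)
      * shiftedBD (n - s) (n + s) s (iteratedDeriv s f) x := by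
  induction s with
  | zero => simp [genuineBD_eq_shiftedBD (by omega : 1 ≤ n)]
  | succ s ih =>
    obtain ⟨M, hM⟩ : ∃ M, n - s = M + 1 := ⟨n - s - 1, by omega⟩
    have hd := hasDerivAt_shiftedBD (M := M) (N := n + s) (s := s) (by omega) (by omega)
      (hf.differentiable_iteratedDeriv' s)
      (by rw [← iteratedDeriv_succ]; exact hf.continuous_iteratedDeriv' (s + 1))
    ext x
    rw [iteratedDeriv_succ, ih (by omega) (hf.of_le (by exact_mod_cast s.le_succ)), hM,
      ((hd x).const_mul _).deriv, ← iteratedDeriv_succ, show n - (s + 1) = M by omega,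
      Nat.descFactorial_succ, Nat.ascFactorial_succ, ← add_assoc]
    have hMcast : (M : ℝ) + 1 = ((n - s : ℕ) : ℝ) := by exact_mod_cast hM.symm
    have hpos : 0 < n.ascFactorial s := by
      simpa [Nat.sub_add_cancel (by omega : 1 ≤ n)] using Nat.ascFactorial_pos (n - 1) s
    rw [hMcast]
    push_cast
    field_simp

lemma abs_shiftedBD_sub_genuineBD_le {m r : ℕ} (hm : 2 ≤ m) {g : ℝ → ℝ}
    (hg : Differentiable ℝ g) (hg' : Continuous (deriv g)) {G : ℝ}
    (hG : ∀ t ∈ Set.Icc (0:ℝ) 1, |deriv g t| ≤ G) {x : ℝ} (hx : x ∈ Set.Icc (0:ℝ) 1) :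
    |shiftedBD m (m + 2 * r) r g x - genuineBD m g x| ≤ r * G / ((m : ℝ) + 2 * r) := by
  rw [genuineBD_eq_sum_bern_mul_bdCoeff (by omega), shiftedBD, ← sum_sub_distrib]
  simp_rw [← mul_sub]
  exact abs_sum_mul_le_of_sum_eq_one (fun k _ => bern_nonneg hx m k) (sum_bern m x)
    fun k hk => abs_bdCoeff_add_sub_bdCoeff_le hm (Nat.lt_succ_iff.1 (mem_range.1 hk)) hg hg' hG

lemma factorial_ratio_mul_descFactorial_div_ascFactorial {n r : ℕ} (hn : 1 ≤ n) (hr : r ≤ n) :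
    ((n + r - 1).factorial * (n - r).factorial / ((n - 1).factorial * n.factorial) : ℝ)
      * (n.descFactorial r / n.ascFactorial r) = 1 := by
  rw [← Nat.factorial_mul_ascFactorial' n r hn, ← Nat.factorial_mul_descFactorial hr]
  have h1 := (n - 1).factorial_pos
  have h2 := (n - r).factorial_pos
  have h3 : 0 < n.descFactorial r := Nat.descFactorial_pos.2 hr
  have h4 : 0 < n.ascFactorial r := by
    simpa [Nat.sub_add_cancel hn] using Nat.ascFactorial_pos (n - 1) r
  push_cast
  field_simp

lemma abs_le_supNorm {h : ℝ → ℝ} (hc : Continuous h) {t : ℝ} (ht : t ∈ Set.Icc (0:ℝ) 1) :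
    |h t| ≤ supNorm h :=
  le_ciSup (isCompact_range (by fun_prop : Continuous fun x : Set.Icc (0:ℝ) 1 => |h x|)).bddAbove
    ⟨t, ht⟩

lemma supNorm_nonneg (h : ℝ → ℝ) : 0 ≤ supNorm h :=
  Real.iSup_nonneg fun _ => abs_nonneg _

lemma modCont_nonneg (g : ℝ → ℝ) (δ : ℝ) : 0 ≤ modCont g δ :=
  Real.sSup_nonneg <| by
    rintro _ ⟨x, -, y, -, -, rfl⟩
    exact abs_nonneg _

theorem genuineBD_derivative_difference_general
    (n r : ℕ) (hr2 : r + 2 ≤ n)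
    (f : ℝ → ℝ) (hf : ContDiff ℝ (r + 2 : ℕ) f) :
    ∀ x ∈ Set.Icc (0:ℝ) 1,
      |((n + r - 1).factorial : ℝ) * ((n - r).factorial : ℝ) /
            (((n - 1).factorial : ℝ) * (n.factorial : ℝ)) *
            iteratedDeriv r (genuineBD n f) x
          - genuineBD (n - r) (iteratedDeriv r f) x| ≤
        (1 / 4) * (((n : ℝ) + 1) / (((n : ℝ) + 1) ^ 2 - (r : ℝ) ^ 2)) *
            supNorm (iteratedDeriv (r + 2) f)
          + (r : ℝ) / ((n : ℝ) + (r : ℝ)) * supNorm (iteratedDeriv (r + 1) f)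
          + modCont (iteratedDeriv r f)
              ((r : ℝ) * ((n : ℝ) - 2 - (r : ℝ)) / ((n : ℝ) ^ 2 - (r : ℝ) ^ 2)) := by
  intro x hx
  have hf' : ContDiff ℝ (r + 1 : ℕ) f := hf.of_le (by exact_mod_cast (r + 1).le_succ)
  have hg : Differentiable ℝ (iteratedDeriv r f) := hf'.differentiable_iteratedDeriv' r
  have hg' : Continuous (deriv (iteratedDeriv r f)) := by
    rw [← iteratedDeriv_succ]
    exact hf'.continuous_iteratedDeriv' (r + 1)
  have hG : ∀ t ∈ Set.Icc (0:ℝ) 1,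
      |deriv (iteratedDeriv r f) t| ≤ supNorm (iteratedDeriv (r + 1) f) :=
    fun t ht => iteratedDeriv_succ (f := f) ▸ abs_le_supNorm hg' ht
  have hmain := abs_shiftedBD_sub_genuineBD_le (m := n - r) (r := r) (by omega) hg hg' hG hx
  rw [show n - r + 2 * r = n + r by omega, show ((n - r : ℕ) : ℝ) + 2 * r = n + r by
    push_cast [Nat.cast_sub (by omega : r ≤ n)]; ring, mul_div_right_comm] at hmain
  rw [iteratedDeriv_genuineBD (by omega) (by omega) (hf.of_le (by exact_mod_cast (by omega))),
    ← mul_assoc, factorial_ratio_mul_descFactorial_div_ascFactorial (by omega) (by omega), one_mul]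
  have hT1 : 0 ≤ (1 / 4) * (((n : ℝ) + 1) / (((n : ℝ) + 1) ^ 2 - (r : ℝ) ^ 2)) *
      supNorm (iteratedDeriv (r + 2) f) := by
    have : (r : ℝ) ≤ n := by exact_mod_cast (by omega : r ≤ n)
    have := supNorm_nonneg (iteratedDeriv (r + 2) f)
    have : 0 ≤ ((n : ℝ) + 1) ^ 2 - (r : ℝ) ^ 2 := by nlinarith
    positivity
  linarith [modCont_nonneg (iteratedDeriv r f)
    ((r : ℝ) * ((n : ℝ) - 2 - (r : ℝ)) / ((n : ℝ) ^ 2 - (r : ℝ) ^ 2))]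

theorem genuineBD_derivative_difference
    (n r : ℕ) (hr1 : 1 ≤ r) (hr2 : r + 2 ≤ n)
    (f : ℝ → ℝ) (hf : ContDiff ℝ (r + 2 : ℕ) f) :
    ∀ x ∈ Set.Icc (0:ℝ) 1,
      |((n + r - 1).factorial : ℝ) * ((n - r).factorial : ℝ) /
            (((n - 1).factorial : ℝ) * (n.factorial : ℝ)) *
            iteratedDeriv r (genuineBD n f) x
          - genuineBD (n - r) (iteratedDeriv r f) x| ≤
        (1 / 4) * (((n : ℝ) + 1) / (((n : ℝ) + 1) ^ 2 - (r : ℝ) ^ 2)) *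
            supNorm (iteratedDeriv (r + 2) f)
          + (r : ℝ) / ((n : ℝ) + (r : ℝ)) * supNorm (iteratedDeriv (r + 1) f)
          + modCont (iteratedDeriv r f)
              ((r : ℝ) * ((n : ℝ) - 2 - (r : ℝ)) / ((n : ℝ) ^ 2 - (r : ℝ) ^ 2)) :=
  genuineBD_derivative_difference_general n r hr2 f hf
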